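/- Let M be a finite monoid, x, z ∈ M, and suppose xz J x. Denote by H₁ the H-class of x and by H₂ the H-class of xz. Then the map m_z : H₁ → H₂ sending y to yz is well-defined and a bijection. -/
import Mathlib


def RLe {M : Type*} [Monoid M] (x y : M) : Prop := ∃ a : M, x = y * a

def LLe {M : Type*} [Monoid M] (x y : M) : Prop := ∃ a : M, x = a * y

def GreenH {M : Type*} [Monoid M] (x y : M) : Prop :=
  (RLe x y ∧ RLe y x) ∧ (LLe x y ∧ LLe y x)

def JLe {M : Type*} [Monoid M] (x y : M) : Prop := ∃ a b : M, x = a * y * b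

def JEq {M : Type*} [Monoid M] (x y : M) : Prop := JLe x y ∧ JLe y x

/-- In a finite monoid, some positive power of any element is idempotent. -/
lemma exists_idem_pow {M : Type*} [Monoid M] [Finite M] (t : M) :
    ∃ n : ℕ, 0 < n ∧ t ^ n * t ^ n = t ^ n := by
  obtain ⟨m, n, hmn, heq⟩ := Finite.exists_ne_map_eq_of_infinite (fun k : ℕ => t ^ k)
  wlog hlt : m < n generalizing m n
  · exact this n m hmn.symm heq.symm (by omega)
  set d := n - m with hd
  have hd0 : 0 < d := by omega
  have step : ∀ k, m ≤ k → t ^ (k + d) = t ^ k := by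
    intro k hk
    have : t ^ (k + d) = t ^ (m + d) * t ^ (k - m) := by
      rw [← pow_add]; congr 1; omega
    rw [this]
    have hmd : m + d = n := by omega
    rw [hmd, ← heq, ← pow_add]
    congr 1; omega
  have key : ∀ j k, m ≤ k → t ^ (k + j * d) = t ^ k := by
    intro j
    induction j with
    | zero => simp
    | succ j ih =>
      intro k hk
      have : k + (j + 1) * d = (k + d) + j * d := by ring
      rw [this, ih (k + d) (by omega), step k hk]
  refine ⟨(m + 1) * d, by positivity, ?_⟩
  rw [← pow_add]
  have : (m + 1) * d + (m + 1) * d = (m + 1) * d + (m + 1) * d := rfl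
  have hge : m ≤ (m + 1) * d := by nlinarith
  exact key (m + 1) ((m + 1) * d) hge

/-- Stability: if x J x*z then x is a right multiple of x*z. -/
lemma stability {M : Type*} [Monoid M] [Finite M] (x z : M)
    (h : JLe x (x * z)) : ∃ w : M, x * z * w = x := by
  obtain ⟨p, q, hpq⟩ := h
  -- x = p * (x*z) * q = p * x * (z*q)
  have hx : x = p * x * (z * q) := by
    conv_lhs => rw [hpq]
    simp [mul_assoc]
  have iter : ∀ n : ℕ, x = p ^ n * x * (z * q) ^ n := by
    intro n
    induction n with
    | zero => simp
    | succ n ih =>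
      calc x = p * x * (z * q) := hx
        _ = p * (p ^ n * x * (z * q) ^ n) * (z * q) := by rw [← ih]
        _ = p ^ (n + 1) * x * (z * q) ^ (n + 1) := by
            rw [pow_succ' p, pow_succ (z * q)]; simp [mul_assoc]
  obtain ⟨n, hn, hidem⟩ := exists_idem_pow (z * q)
  have hxe : x * (z * q) ^ n = x := by
    conv_lhs => rw [iter n]
    rw [mul_assoc, hidem, ← iter n]
  refine ⟨q * (z * q) ^ (n - 1), ?_⟩
  have : x * z * (q * (z * q) ^ (n - 1)) = x * (z * q) ^ n := by
    have h1 : (z * q) ^ n = (z * q) * (z * q) ^ (n - 1) := by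
      conv_lhs => rw [show n = 1 + (n - 1) by omega]
      rw [pow_add, pow_one]
    rw [h1]; group
  rw [this, hxe]

/-- Green's lemma, part II: if xz J x, then right multiplication by z is a
    well-defined bijection from the H-class of x onto the H-class of xz. -/
theorem green_lemma_II {M : Type*} [Monoid M] [Finite M] (x z : M)
    (h : JEq (x * z) x) :
    Set.BijOn (fun y => y * z) {u : M | GreenH u x} {u : M | GreenH u (x * z)} := by
  obtain ⟨w, hw⟩ := stability x z h.2
  -- hw : x * z * w = x
  -- ρ_w ∘ ρ_z = id on L_x
  have lzw : ∀ u : M, LLe u x → u * z * w = u := by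
    rintro u ⟨a, ha⟩
    rw [ha, mul_assoc, mul_assoc, ← mul_assoc x z w, hw]
  -- ρ_z ∘ ρ_w = id on L_{xz}
  have lwz : ∀ u : M, LLe u (x * z) → u * w * z = u := by
    rintro u ⟨a, ha⟩
    have : x * z * w * z = x * z := by rw [hw]
    rw [ha, mul_assoc, mul_assoc, ← mul_assoc (x*z) w z, this]
  -- forward map sends H_x into H_{xz}
  have fwd : ∀ y : M, GreenH y x → GreenH (y * z) (x * z) := by
    rintro y ⟨⟨⟨c, hc⟩, ⟨d, hd⟩⟩, hL⟩
    constructor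
    · -- R part: y*z R x*z
      constructor
      · -- y*z = (x*z) * ?
        -- y = x*c so... use y*z R y: y = y*z*w, and y R x, x R xz
        refine ⟨w * c * z, ?_⟩
        have h1 : x * z * (w * c * z) = (x * z * w) * c * z := by simp [mul_assoc]
        rw [h1, hw, ← hc]
      · -- x*z = (y*z) * ?
        refine ⟨w * d * z, ?_⟩
        have hy : y * z * w = y := lzw y hL.1
        calc x * z = y * d * z := by rw [hd]
          _ = (y * z * w) * d * z := by rw [hy]
          _ = y * z * (w * d * z) := by simp [mul_assoc]
    · -- L part
      obtain ⟨⟨a, ha⟩, ⟨b, hb⟩⟩ := hL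
      exact ⟨⟨a, by rw [ha]; simp [mul_assoc]⟩, ⟨b, by rw [hb]; simp [mul_assoc]⟩⟩
  -- backward map sends H_{xz} into H_x
  have bwd : ∀ u : M, GreenH u (x * z) → GreenH (u * w) x := by
    rintro u ⟨⟨⟨c, hc⟩, ⟨d, hd⟩⟩, ⟨⟨a, ha⟩, ⟨b, hb⟩⟩⟩
    have hu : u * w * z = u := lwz u ⟨a, ha⟩
    constructor
    · constructor
      · -- u*w = x * ?
        refine ⟨z * c * w, ?_⟩
        rw [hc]; simp [mul_assoc]
      · -- x = (u*w) * ?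
        refine ⟨z * d * w, ?_⟩
        calc x = x * z * w := hw.symm
          _ = (u * d) * w := by rw [hd]
          _ = (u * w * z) * d * w := by rw [hu]
          _ = u * w * (z * d * w) := by simp [mul_assoc]
    · constructor
      · exact ⟨a, by rw [ha, mul_assoc, hw]⟩
      · refine ⟨b, ?_⟩
        conv_lhs => rw [← hw, hb]
        rw [mul_assoc]
  have inv : Set.InvOn (fun u : M => u * w) (fun y : M => y * z)
      {u : M | GreenH u x} {u : M | GreenH u (x * z)} :=
    ⟨fun y hy => lzw y hy.2.1, fun u hu => lwz u hu.2.1⟩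
  exact inv.bijOn (fun y hy => fwd y hy) (fun u hu => bwd u hu)
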